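/- Let M:(ℝ,≤)²→vect_F be a persistence module and let J₁ and J₂ be disjoint connected and convex subposets of (ℝ,≤)² such that M(i≤j) is an isomorphism for all i≤j in Jₖ (k=1,2). If there exist a ∈ J₁ and b ∈ J₂ with a ≤ b, then there exists a well-defined linear map φ_{J₁J₂}: lim_{J₁}M → lim_{J₂}M such that τ_b ∘ φ_{J₁J₂} = M(a≤b) ∘ σ_a, where σ and τ are the limit cones of M restricted to J₁ and J₂ respectively; moreover φ_{J₁J₂} does not depend on the choice of the comparable pair a ≤ b. -/

import Mathlib

/-- A persistence module over a preorder `P` with coefficients in a field `F`: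
a functor `(P,≤) → Vect_F`, given by vector spaces `V p` and linear maps
`map : i ≤ j → (V i →ₗ[F] V j)` satisfying the functoriality equations. -/
structure PersistenceModule (F : Type) [Field F] (P : Type) [Preorder P] where
  V : P → Type
  [addCommGroup : ∀ p, AddCommGroup (V p)]
  [module : ∀ p, Module F (V p)]
  map : ∀ {i j : P}, i ≤ j → (V i →ₗ[F] V j)
  map_id : ∀ i : P, map (le_refl i) = LinearMap.id
  map_comp : ∀ {i j k : P} (hij : i ≤ j) (hjk : j ≤ k),
    (map hjk).comp (map hij) = map (hij.trans hjk)

attribute [instance] PersistenceModule.addCommGroup PersistenceModule.module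

/-- A zigzag path `a - x₁ - ⋯ - xₙ - b` in a preorder, where each consecutive
pair of points is comparable. -/
inductive Zigzag (P : Type) [Preorder P] : P → P → Type
  | single (a : P) : Zigzag P a a
  | consLe {a b c : P} (h : a ≤ b) (p : Zigzag P b c) : Zigzag P a c
  | consGe {a b c : P} (h : b ≤ a) (p : Zigzag P b c) : Zigzag P a c

/-- Convexity of a subset of a poset: `i ≤ j ≤ k` with `i, k ∈ J` implies `j ∈ J`. -/
def PosetConvex {P : Type} [Preorder P] (J : Set P) : Prop :=
  ∀ i ∈ J, ∀ k ∈ J, ∀ j : P, i ≤ j → j ≤ k → j ∈ J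

/-- Connectedness: any two points of `J` are joined by a finite zigzag path inside `J`. -/
def ZigzagConnected {P : Type} [Preorder P] (J : Set P) : Prop :=
  ∀ a b : J, Nonempty (Zigzag (↥J) a b)

/-- Restriction of a persistence module to a subset of the parameter poset. -/
def PersistenceModule.restrict {F : Type} [Field F] {P : Type} [Preorder P]
    (M : PersistenceModule F P) (J : Set P) : PersistenceModule F ↥J where
  V i := M.V ↑i
  map {i j} h := M.map (show (i : P) ≤ (j : P) from h)
  map_id i := M.map_id ↑i
  map_comp _ _ := M.map_comp _ _

/-- `L` together with the legs `σ` is a limit cone over the persistence module `M`. -/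
def IsLimitCone {F : Type} [Field F] {P : Type} [Preorder P] (M : PersistenceModule F P)
    (L : Type) [AddCommGroup L] [Module F L] (σ : ∀ i : P, L →ₗ[F] M.V i) : Prop :=
  (∀ (i j : P) (h : i ≤ j), (M.map h).comp (σ i) = σ j) ∧
  ∀ (N : Type) [AddCommGroup N] [Module F N] (τ : ∀ i : P, N →ₗ[F] M.V i),
    (∀ (i j : P) (h : i ≤ j), (M.map h).comp (τ i) = τ j) →
    ∃! φ : N →ₗ[F] L, ∀ i : P, (σ i).comp φ = τ i

/-!
On a convex set `J ⊆ ℝ²` where all structure maps of `M` are isomorphisms, the isomorphism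
transported along a zigzag depends only on its endpoints. The reason is that every zigzag can be
deformed, by cutting corners of triangles of comparable points, into one inside the box spanned
by its endpoints: repeatedly replace a vertex with the highest first coordinate by the join of its
neighbours or cut it, then do the same for the second coordinate, then dually. A loop at `i`
thereby becomes a zigzag below `i`, whose transport is trivial. Consequently every leg `τ_b` of
the limit over `J₂` is an isomorphism, and `φ` has to be `τ_b⁻¹ ∘ M(a ≤ b) ∘ σ_a`.

For independence of the pair, join `a` to `a'` by a zigzag `W` in `J₁` below `a ⊔ a'` and `b` to
`b'` by a zigzag `Z` in `J₂` above `b ⊓ b'`. Every point of `Z` lies above a point of `J₁`: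
otherwise, crossing `W` and `Z` alternately, convexity and disjointness produce such bad points of
`J₂` at strictly increasing heights, all taken from the finitely many heights of `W`. Along `Z`
the maps `M(w ≤ z) ∘ σ_w` then match step by step, because two of them with the same target agree
(transport along a zigzag of `J₁` below the target).
-/

open Function Relation

inductive RelWalk {P : Type} (adj : P → P → Prop) (J : Set P) : P → P → Type
  | nil {a : P} (ha : a ∈ J) : RelWalk adj J a a
  | cons {a b c : P} (ha : a ∈ J) (h : adj a b) (p : RelWalk adj J b c) : RelWalk adj J a c

namespace RelWalk

variable {P : Type} {adj : P → P → Prop} {J : Set P}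

def support : ∀ {a b : P}, RelWalk adj J a b → List P
  | a, _, nil _ => [a]
  | a, _, cons _ _ p => a :: p.support

theorem start_mem : ∀ {a b : P}, RelWalk adj J a b → a ∈ J
  | _, _, nil ha => ha
  | _, _, cons ha _ _ => ha

@[simp] theorem support_nil {a : P} (ha : a ∈ J) : (nil (adj := adj) ha).support = [a] := rfl

@[simp] theorem support_cons {a b c : P} (ha : a ∈ J) (h : adj a b) (p : RelWalk adj J b c) :
    (cons ha h p).support = a :: p.support := rfl

theorem start_mem_support {a b : P} (p : RelWalk adj J a b) : a ∈ p.support := by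
  cases p <;> simp

theorem mem_of_mem_support {a b : P} (p : RelWalk adj J a b) {x : P} (hx : x ∈ p.support) :
    x ∈ J := by
  induction p with
  | nil ha => simp_all
  | cons ha _ _ ih =>
    rcases List.mem_cons.1 hx with rfl | hx
    exacts [ha, ih hx]

def map {Q : Type} {adj' : Q → Q → Prop} {J' : Set Q} (f : P → Q)
    (hf : ∀ ⦃x y⦄, adj x y → adj' (f x) (f y)) (hJ : ∀ x ∈ J, f x ∈ J') :
    ∀ {a b : P}, RelWalk adj J a b → RelWalk adj' J' (f a) (f b)
  | a, _, nil ha => nil (hJ a ha)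
  | a, _, cons ha h p => cons (hJ a ha) (hf h) (p.map f hf hJ)

@[simp] theorem support_map {Q : Type} {adj' : Q → Q → Prop} {J' : Set Q} (f : P → Q)
    (hf : ∀ ⦃x y⦄, adj x y → adj' (f x) (f y)) (hJ : ∀ x ∈ J, f x ∈ J') {a b : P}
    (p : RelWalk adj J a b) : (p.map f hf hJ).support = p.support.map f := by
  induction p with
  | nil => rfl
  | cons _ _ _ ih => simp [map, ih]

theorem exists_adj_of_not (Q : P → Prop) {a b : P} (p : RelWalk adj J a b) (ha : Q a)
    (hb : ¬ Q b) : ∃ x ∈ p.support, x ∈ J ∧ Q x ∧ ∃ y ∈ J, adj x y ∧ ¬ Q y := by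
  induction p with
  | nil => exact absurd ha hb
  | @cons a b' _ ha' h p ih =>
    by_cases hb' : Q b'
    · obtain ⟨x, hx, rest⟩ := ih hb' hb
      exact ⟨x, List.mem_cons_of_mem _ hx, rest⟩
    · exact ⟨a, List.mem_cons_self .., ha', ha, b', p.start_mem, h, hb'⟩

inductive Homotopic : ∀ {a b : P}, RelWalk adj J a b → RelWalk adj J a b → Prop
  | refl {a b : P} (p : RelWalk adj J a b) : Homotopic p p
  | symm {a b : P} {p q : RelWalk adj J a b} : Homotopic p q → Homotopic q p
  | trans {a b : P} {p q r : RelWalk adj J a b} : Homotopic p q → Homotopic q r → Homotopic p r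
  | cons {a b c : P} (ha : a ∈ J) (h : adj a b) {p q : RelWalk adj J b c} :
      Homotopic p q → Homotopic (RelWalk.cons ha h p) (RelWalk.cons ha h q)
  | contract {a b c d : P} (ha : a ∈ J) (hb : b ∈ J) (hab : adj a b) (hbc : adj b c)
      (hac : adj a c) (p : RelWalk adj J c d) :
      Homotopic (RelWalk.cons ha hab (RelWalk.cons hb hbc p)) (RelWalk.cons ha hac p)

theorem Homotopic.replace_second {a b s c d : P} (ha : a ∈ J) (hb : b ∈ J) (hs : s ∈ J)
    (hab : adj a b) (hbc : adj b c) (has : adj a s) (hsb : adj s b) (hsc : adj s c)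
    (p : RelWalk adj J c d) :
    Homotopic (RelWalk.cons ha hab (RelWalk.cons hb hbc p))
      (RelWalk.cons ha has (RelWalk.cons hs hsc p)) :=
  (contract ha hs has hsb hab (RelWalk.cons hb hbc p)).symm.trans
    (cons ha has (contract hs hb hsb hbc hsc p))

end RelWalk

def RelWalk.ofZigzag {P : Type} [Preorder P] {J : Set P} :
    ∀ {a b : ↥J}, Zigzag ↥J a b → RelWalk (SymmGen (· ≤ ·)) J a b
  | a, _, .single _ => .nil a.2
  | a, _, .consLe h p => .cons a.2 (.of_le h) (ofZigzag p)
  | a, _, .consGe h p => .cons a.2 (.of_ge h) (ofZigzag p)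

theorem ZigzagConnected.nonempty_relWalk {P : Type} [Preorder P] {J : Set P}
    (hJ : ZigzagConnected J) {a b : P} (ha : a ∈ J) (hb : b ∈ J) :
    Nonempty (RelWalk (SymmGen (· ≤ ·)) J a b) :=
  ⟨.ofZigzag (hJ ⟨a, ha⟩ ⟨b, hb⟩).some⟩

theorem Finset.card_filter_le_lt_of_lt {α : Type} [LinearOrder α] (K : Finset α) {s t : α}
    (hst : s < t) (ht : t ∈ K) : (K.filter (· ≤ s)).card < (K.filter (· ≤ t)).card :=
  Finset.card_lt_card <| (Finset.ssubset_iff_of_subset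
    (Finset.monotone_filter_right _ fun _ _ h => h.trans hst.le)).2
    ⟨t, Finset.mem_filter.2 ⟨ht, le_rfl⟩, fun h => (Finset.mem_filter.1 h).2.not_gt hst⟩

section Pass

-- Walks are taken along an abstract relation `adj` equivalent to comparability, so that the
-- results also apply to the same walks for the dual order.

variable {P α : Type} [Lattice P] [LinearOrder α] {adj : P → P → Prop} {J : Set P}

namespace RelWalk

def levelWeight (K : Finset α) (κ : P → α) : ∀ {a b : P}, RelWalk adj J a b → ℕ
  | a, _, nil _ => (K.filter (· ≤ κ a)).card
  | a, _, cons _ _ p => (K.filter (· ≤ κ a)).card + p.levelWeight K κ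

theorem exists_homotopic_levelWeight_lt_of_second (hadj : ∀ x y, adj x y ↔ x ≤ y ∨ y ≤ x)
    (hJ : PosetConvex J) (κ : SupHom P α) (hκ : ∀ x y, κ x = κ y → x ≤ y ∨ y ≤ x)
    (K : Finset α) {c : α} {a b j : P} (ha : a ∈ J) (hab : adj a b) (p : RelWalk adj J b j)
    (hK : ∀ x ∈ (cons ha hab p).support, κ x ∈ K ∧ κ x ≤ c)
    (hac : κ a < c) (hbc : κ b = c) (hj : κ j < c) :
    ∃ q : RelWalk adj J a j, (cons ha hab p).Homotopic q ∧
      q.levelWeight K κ < (cons ha hab p).levelWeight K κ ∧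
      ∀ x ∈ q.support, κ x ∈ K ∧ ∃ y ∈ (cons ha hab p).support, x ≤ y := by
  have le_of_lt : ∀ {x y}, adj x y → κ x < κ y → x ≤ y := fun h hlt =>
    ((hadj _ _).1 h).resolve_right fun hyx => (OrderHomClass.mono κ hyx).not_gt hlt
  have hb := hK b (by simp [p.start_mem_support])
  have keep : ∀ x ∈ (cons ha hab p).support, κ x ∈ K ∧ ∃ y ∈ (cons ha hab p).support, x ≤ y :=
    fun x hx => ⟨(hK x hx).1, x, hx, le_rfl⟩
  have hab' : a ≤ b := le_of_lt hab (hbc ▸ hac)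
  cases p with
  | nil => exact absurd (hbc ▸ hj) (lt_irrefl _)
  | @cons _ w _ hbJ hbw p =>
  have hw := hK w (by simp [p.start_mem_support])
  rcases hw.2.lt_or_eq with hwc | hwc
  · -- `b` is a strict peak: lower it to `a ⊔ w`
    have hwb : w ≤ b := le_of_lt ((hadj _ _).2 ((hadj _ _).1 hbw).symm) (hbc ▸ hwc)
    have hs : a ⊔ w ∈ J := hJ a ha b hbJ _ le_sup_left (sup_le hab' hwb)
    have hκs : κ (a ⊔ w) = max (κ a) (κ w) := map_sup κ a w
    refine ⟨cons ha ((hadj _ _).2 (.inl le_sup_left))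
        (cons hs ((hadj _ _).2 (.inr le_sup_right)) p),
      .replace_second ha hbJ hs hab hbw _ ((hadj _ _).2 (.inl (sup_le hab' hwb))) _ p, ?_, ?_⟩
    · have := K.card_filter_le_lt_of_lt (hκs ▸ hbc ▸ max_lt hac hwc) hb.1
      simp only [levelWeight]; omega
    · intro x hx
      simp only [support_cons, List.mem_cons] at hx
      rcases hx with rfl | rfl | hx
      · exact keep x (by simp)
      · refine ⟨?_, b, by simp, sup_le hab' hwb⟩
        rw [hκs]
        rcases max_choice (κ a) (κ w) with h | h <;> rw [h]
        exacts [(hK a (by simp)).1, hw.1]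
      · exact keep x (by simp [hx])
  rcases hκ b w (hbc.trans hwc.symm) with hbw' | hwb
  · refine ⟨cons ha ((hadj _ _).2 (.inl (hab'.trans hbw'))) p, .contract ha hbJ hab hbw _ p,
      ?_, fun x hx => keep x (by simp at hx ⊢; tauto)⟩
    have : 0 < (K.filter (· ≤ κ b)).card :=
      Finset.card_pos.2 ⟨_, Finset.mem_filter.2 ⟨hb.1, le_rfl⟩⟩
    simp only [levelWeight]; omega
  cases p with
  | nil => exact absurd (hwc ▸ hj) (lt_irrefl _)
  | @cons _ w' _ hwJ hww' p =>
  -- `b`, `w`, `w'` are pairwise comparable: cut `w`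
  have hbw' : adj b w' := by
    rcases (hK w' (by simp [p.start_mem_support])).2.lt_or_eq with hw'c | hw'c
    · exact (hadj _ _).2 (.inr ((le_of_lt ((hadj _ _).2 ((hadj _ _).1 hww').symm)
        (hwc ▸ hw'c)).trans hwb))
    · exact (hadj _ _).2 (hκ b w' (hbc.trans hw'c.symm))
  refine ⟨cons ha hab (cons hbJ hbw' p), .cons ha hab (.contract hbJ hwJ hbw hww' hbw' p), ?_,
    fun x hx => keep x (by simp at hx ⊢; tauto)⟩
  have : 0 < (K.filter (· ≤ κ w)).card := Finset.card_pos.2 ⟨_, Finset.mem_filter.2 ⟨hw.1, le_rfl⟩⟩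
  simp only [levelWeight]; omega

theorem exists_homotopic_levelWeight_lt (hadj : ∀ x y, adj x y ↔ x ≤ y ∨ y ≤ x)
    (hJ : PosetConvex J) (κ : SupHom P α) (hκ : ∀ x y, κ x = κ y → x ≤ y ∨ y ≤ x)
    (K : Finset α) {c : α} {i j : P} (p : RelWalk adj J i j)
    (hK : ∀ x ∈ p.support, κ x ∈ K ∧ κ x ≤ c) (htop : ∃ x ∈ p.support, κ x = c)
    (hi : κ i < c) (hj : κ j < c) :
    ∃ q : RelWalk adj J i j, p.Homotopic q ∧ q.levelWeight K κ < p.levelWeight K κ ∧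
      ∀ x ∈ q.support, κ x ∈ K ∧ ∃ y ∈ p.support, x ≤ y := by
  induction p with
  | nil => obtain ⟨x, hx, rfl⟩ := htop; simp at hx; exact absurd (hx ▸ hi) (lt_irrefl _)
  | @cons a b j ha hab p ih =>
    rcases (hK b (by simp [p.start_mem_support])).2.lt_or_eq with hbc | hbc
    · obtain ⟨q, hpq, hw, hq⟩ := ih (fun x hx => hK x (List.mem_cons_of_mem _ hx))
        (by simpa [hi.ne] using htop) hbc hj
      refine ⟨cons ha hab q, .cons ha hab hpq, by simp only [levelWeight]; omega, ?_⟩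
      intro x hx
      rcases List.mem_cons.1 hx with rfl | hx
      · exact ⟨(hK x (by simp)).1, x, by simp, le_rfl⟩
      · obtain ⟨hxK, y, hy, hxy⟩ := hq x hx
        exact ⟨hxK, y, List.mem_cons_of_mem _ hy, hxy⟩
    · exact exists_homotopic_levelWeight_lt_of_second hadj hJ κ hκ K ha hab p hK hi hbc hj

theorem exists_homotopic_coord_le_of_mem (hadj : ∀ x y, adj x y ↔ x ≤ y ∨ y ≤ x)
    (hJ : PosetConvex J) (κ : SupHom P α) (hκ : ∀ x y, κ x = κ y → x ≤ y ∨ y ≤ x)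
    (K : Finset α) {i j : P} (p : RelWalk adj J i j) (hK : ∀ x ∈ p.support, κ x ∈ K) :
    ∃ q : RelWalk adj J i j, p.Homotopic q ∧ (∀ x ∈ q.support, κ x ≤ max (κ i) (κ j)) ∧
      ∀ x ∈ q.support, ∃ y ∈ p.support, x ≤ y := by
  by_cases hbound : ∀ x ∈ p.support, κ x ≤ max (κ i) (κ j)
  · exact ⟨p, .refl p, hbound, fun x hx => ⟨x, hx, le_rfl⟩⟩
  push Not at hbound
  obtain ⟨x₀, hx₀, hgt⟩ := hbound
  obtain ⟨m, hm, hmax⟩ := Set.exists_max_image {x | x ∈ p.support} κ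
    p.support.finite_toSet ⟨x₀, hx₀⟩
  have hlt : max (κ i) (κ j) < κ m := hgt.trans_le (hmax x₀ hx₀)
  obtain ⟨q, hpq, hw, hq⟩ := exists_homotopic_levelWeight_lt hadj hJ κ hκ K p
    (fun x hx => ⟨hK x hx, hmax x hx⟩) ⟨m, hm, rfl⟩
    ((le_max_left _ _).trans_lt hlt) ((le_max_right _ _).trans_lt hlt)
  obtain ⟨r, hqr, hr, hdom⟩ :=
    exists_homotopic_coord_le_of_mem hadj hJ κ hκ K q fun x hx => (hq x hx).1
  refine ⟨r, hpq.trans hqr, hr, fun x hx => ?_⟩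
  obtain ⟨y, hy, hxy⟩ := hdom x hx
  obtain ⟨-, z, hz, hyz⟩ := hq y hy
  exact ⟨z, hz, hxy.trans hyz⟩
termination_by p.levelWeight K κ

theorem exists_homotopic_coord_le (hadj : ∀ x y, adj x y ↔ x ≤ y ∨ y ≤ x)
    (hJ : PosetConvex J) (κ : SupHom P α) (hκ : ∀ x y, κ x = κ y → x ≤ y ∨ y ≤ x)
    {i j : P} (p : RelWalk adj J i j) :
    ∃ q : RelWalk adj J i j, p.Homotopic q ∧ (∀ x ∈ q.support, κ x ≤ max (κ i) (κ j)) ∧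
      ∀ x ∈ q.support, ∃ y ∈ p.support, x ≤ y := by
  classical
  exact exists_homotopic_coord_le_of_mem hadj hJ κ hκ _ p fun x hx =>
    List.mem_toFinset.2 (List.mem_map_of_mem hx)

end RelWalk

end Pass

section Halves

variable {α β : Type} [LinearOrder α] [LinearOrder β]

theorem Prod.le_or_le_of_fst_eq {x y : α × β} (h : x.1 = y.1) : x ≤ y ∨ y ≤ x :=
  (le_total x.2 y.2).imp (fun h₂ => ⟨h.le, h₂⟩) fun h₂ => ⟨h.ge, h₂⟩

theorem Prod.le_or_le_of_snd_eq {x y : α × β} (h : x.2 = y.2) : x ≤ y ∨ y ≤ x :=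
  (le_total x.1 y.1).imp (fun h₁ => ⟨h₁, h.le⟩) fun h₁ => ⟨h₁, h.ge⟩

namespace RelWalk

variable {adj : α × β → α × β → Prop} {J : Set (α × β)}

theorem exists_homotopic_le_sup (hadj : ∀ x y, adj x y ↔ x ≤ y ∨ y ≤ x) (hJ : PosetConvex J)
    {i j : α × β} (p : RelWalk adj J i j) :
    ∃ q : RelWalk adj J i j, p.Homotopic q ∧ ∀ x ∈ q.support, x ≤ i ⊔ j := by
  obtain ⟨q₁, hpq₁, hq₁, -⟩ := exists_homotopic_coord_le hadj hJ
    (LatticeHom.fst : LatticeHom (α × β) α).toSupHom (fun _ _ => Prod.le_or_le_of_fst_eq) p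
  obtain ⟨q₂, hq₁q₂, hq₂, hdom⟩ := exists_homotopic_coord_le hadj hJ
    (LatticeHom.snd : LatticeHom (α × β) β).toSupHom (fun _ _ => Prod.le_or_le_of_snd_eq) q₁
  refine ⟨q₂, hpq₁.trans hq₁q₂, fun x hx => ⟨?_, hq₂ x hx⟩⟩
  obtain ⟨y, hy, hxy⟩ := hdom x hx
  exact hxy.1.trans (hq₁ y hy)

theorem exists_homotopic_inf_le (hadj : ∀ x y, adj x y ↔ x ≤ y ∨ y ≤ x) (hJ : PosetConvex J)
    {i j : α × β} (p : RelWalk adj J i j) :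
    ∃ q : RelWalk adj J i j, p.Homotopic q ∧ ∀ x ∈ q.support, i ⊓ j ≤ x :=
  exists_homotopic_le_sup (α := αᵒᵈ) (β := βᵒᵈ) (fun x y => (hadj x y).trans or_comm)
    (fun i hi k hk j h₁ h₂ => hJ k hk i hi j h₂ h₁) p

end RelWalk

end Halves

theorem Finset.forall_not_of_exists_lt {ι γ : Type} [LinearOrder γ] (H : Finset γ) (f : ι → γ)
    (Bad : ι → Prop) (step : ∀ y, Bad y → ∃ d, Bad d ∧ f y < f d ∧ f d ∈ H) (y : ι) :
    ¬ Bad y := by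
  classical
  intro hy
  obtain ⟨d₀, hd₀, -, hd₀H⟩ := step y hy
  obtain ⟨h, hh, hmax⟩ := (H.filter fun h => ∃ d, Bad d ∧ f d = h).exists_max_image id
    ⟨f d₀, Finset.mem_filter.2 ⟨hd₀H, d₀, hd₀, rfl⟩⟩
  obtain ⟨-, d, hd, rfl⟩ := Finset.mem_filter.1 hh
  obtain ⟨d', hd', hlt, hd'H⟩ := step d hd
  exact (hmax _ (Finset.mem_filter.2 ⟨hd'H, d', hd', rfl⟩)).not_gt hlt

section Geometry

variable {α β : Type} [LinearOrder α] [LinearOrder β] {J₁ J₂ : Set (α × β)}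

theorem exists_le_of_mem_support_of_lt (hJ₁ : PosetConvex J₁) (hJ₂ : PosetConvex J₂)
    (hdisj : Disjoint J₁ J₂) {a a' b b' : α × β} (ha : a ∈ J₁) (ha' : a' ∈ J₁)
    (hab : a ≤ b) (ha'b' : a' ≤ b') (h₁ : b'.1 < a.1) (h₂ : b.2 < a'.2)
    (W : RelWalk (SymmGen (· ≤ ·)) J₁ a a') (hW : ∀ x ∈ W.support, x ≤ a ⊔ a')
    (Z : RelWalk (SymmGen (· ≤ ·)) J₂ b b') (hZ : ∀ z ∈ Z.support, b ⊓ b' ≤ z) :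
    ∀ y ∈ Z.support, ∃ w ∈ J₁, w ≤ y := by
  have hb₁ : (b ⊓ b').1 = b'.1 := min_eq_right (h₁.le.trans hab.1)
  have hb₂ : (b ⊓ b').2 = b.2 := min_eq_left (h₂.le.trans ha'b'.2)
  -- a point of `J₂` above `b ⊓ b'` with no point of `J₁` below it yields a higher one,
  -- at the height of some point of `W`
  have step : ∀ y ∈ J₂, b ⊓ b' ≤ y → (∀ w ∈ J₁, ¬ w ≤ y) →
      ∃ d ∈ J₂, b ⊓ b' ≤ d ∧ (∀ w ∈ J₁, ¬ w ≤ d) ∧ y.2 < d.2 ∧ d.2 ∈ W.support.map Prod.snd := by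
    intro y hy hby hbad
    have hy₁ : b'.1 ≤ y.1 := hb₁ ▸ hby.1
    have hy₂ : b.2 ≤ y.2 := hb₂ ▸ hby.2
    have hya : y.1 < a.1 := lt_of_not_ge fun h => hbad a ha ⟨h, hab.2.trans hy₂⟩
    have hya' : y.2 < a'.2 := lt_of_not_ge fun h => hbad a' ha' ⟨ha'b'.1.trans hy₁, h⟩
    obtain ⟨x, hxW, hx, hyx, x', hx', hxx', hx'y⟩ :=
      W.exists_adj_of_not (fun x => y.1 < x.1) hya (not_lt.2 (ha'b'.1.trans hy₁))
    have hx'x : x' ≤ x := (id hxx' : x ≤ x' ∨ x' ≤ x).resolve_left fun h => hx'y (hyx.trans_le h.1)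
    have hv : (y.1, x.2) ∈ J₁ := hJ₁ x' hx' x hx _ ⟨not_lt.1 hx'y, hx'x.2⟩ ⟨hyx.le, le_rfl⟩
    have hyv : y.2 < x.2 := lt_of_not_ge fun h => hbad _ hv ⟨le_rfl, h⟩
    have hxa' : x.2 ≤ a'.2 := (hW x hxW).2.trans (max_le (hab.2.trans (hy₂.trans hya'.le)) le_rfl)
    obtain ⟨z, hzZ, hz, hzx, z', hz', hzz', hz'x⟩ := Z.exists_adj_of_not (fun z => z.2 < x.2)
      (hy₂.trans_lt hyv) (not_lt.2 (hxa'.trans ha'b'.2))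
    have hzz'le : z ≤ z' :=
      (id hzz' : z ≤ z' ∨ z' ≤ z).resolve_right fun h => hz'x (h.2.trans_lt hzx)
    have hd : (z.1, x.2) ∈ J₂ := hJ₂ z hz z' hz' _ ⟨le_rfl, hzx.le⟩ ⟨hzz'le.1, not_lt.1 hz'x⟩
    have hzy : z.1 < y.1 := lt_of_not_ge fun h =>
      Set.disjoint_left.1 hdisj hv (hJ₂ y hy _ hd _ ⟨le_rfl, hyv.le⟩ ⟨h, le_rfl⟩)
    refine ⟨_, hd, (hZ z hzZ).trans ⟨le_rfl, hzx.le⟩, fun w hw hwd => ?_, hyv,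
      (List.mem_map_of_mem hxW : x.2 ∈ W.support.map Prod.snd)⟩
    exact Set.disjoint_left.1 hdisj (hJ₁ w hw _ hv _ hwd ⟨hzy.le, le_rfl⟩) hd
  intro y hy
  by_contra! hbad
  exact Finset.forall_not_of_exists_lt (W.support.map Prod.snd).toFinset Prod.snd
    (fun y => y ∈ J₂ ∧ b ⊓ b' ≤ y ∧ ∀ w ∈ J₁, ¬ w ≤ y)
    (fun y ⟨hy, hby, hbad⟩ => by
      obtain ⟨d, hd, hbd, hdbad, hlt, hdW⟩ := step y hy hby hbad
      exact ⟨d, ⟨hd, hbd, hdbad⟩, hlt, List.mem_toFinset.2 hdW⟩)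
    y ⟨Z.mem_of_mem_support hy, hZ y hy, hbad⟩

theorem exists_le_of_mem_support (hJ₁ : PosetConvex J₁) (hJ₂ : PosetConvex J₂)
    (hdisj : Disjoint J₁ J₂) {a a' b b' : α × β} (ha : a ∈ J₁) (ha' : a' ∈ J₁)
    (hab : a ≤ b) (ha'b' : a' ≤ b')
    (W : RelWalk (SymmGen (· ≤ ·)) J₁ a a') (hW : ∀ x ∈ W.support, x ≤ a ⊔ a')
    (Z : RelWalk (SymmGen (· ≤ ·)) J₂ b b') (hZ : ∀ z ∈ Z.support, b ⊓ b' ≤ z) :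
    ∀ y ∈ Z.support, ∃ w ∈ J₁, w ≤ y := by
  by_cases hab' : a ≤ b'
  · exact fun y hy => ⟨a, ha, (le_inf hab hab').trans (hZ y hy)⟩
  by_cases ha'b : a' ≤ b
  · exact fun y hy => ⟨a', ha', (le_inf ha'b ha'b').trans (hZ y hy)⟩
  rcases lt_or_ge b'.1 a.1 with h₁ | h₁
  · have h₂ : b.2 < a'.2 := lt_of_not_ge fun h => ha'b ⟨ha'b'.1.trans (h₁.le.trans hab.1), h⟩
    exact exists_le_of_mem_support_of_lt hJ₁ hJ₂ hdisj ha ha' hab ha'b' h₁ h₂ W hW Z hZ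
  -- otherwise the same configuration appears after exchanging the coordinates
  have h₁' : b'.2 < a.2 := lt_of_not_ge fun h => hab' ⟨h₁, h⟩
  have h₂ : b.1 < a'.1 := lt_of_not_ge fun h => ha'b ⟨h, ha'b'.2.trans (h₁'.le.trans hab.2)⟩
  have swap_adj : ∀ ⦃x y : α × β⦄, SymmGen (· ≤ ·) x y → SymmGen (· ≤ ·) x.swap y.swap :=
    fun _ _ h => Or.imp Prod.swap_le_swap.2 Prod.swap_le_swap.2 h
  have swap_convex : ∀ {J : Set (α × β)}, PosetConvex J → PosetConvex (Prod.swap ⁻¹' J) :=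
    fun hJ i hi k hk j hij hjk => hJ _ hi _ hk _ (Prod.swap_le_swap.2 hij) (Prod.swap_le_swap.2 hjk)
  have swap_mem : ∀ {J : Set (α × β)}, ∀ x ∈ J, x.swap ∈ Prod.swap ⁻¹' J := fun x hx => by
    simpa using hx
  have key := exists_le_of_mem_support_of_lt (swap_convex hJ₁) (swap_convex hJ₂)
    (hdisj.preimage _) (swap_mem a ha) (swap_mem a' ha') (Prod.swap_le_swap.2 hab)
    (Prod.swap_le_swap.2 ha'b') h₁' h₂ (W.map Prod.swap swap_adj swap_mem)
    (fun x hx => by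
      obtain ⟨x', hx', rfl⟩ := List.mem_map.1 ((RelWalk.support_map ..) ▸ hx)
      exact Prod.swap_le_swap.2 (hW x' hx'))
    (Z.map Prod.swap swap_adj swap_mem) (fun z hz => by
      obtain ⟨z', hz', rfl⟩ := List.mem_map.1 ((RelWalk.support_map ..) ▸ hz)
      exact Prod.swap_le_swap.2 (hZ z' hz'))
  intro y hy
  obtain ⟨w, hw, hwy⟩ := key y.swap (by rw [RelWalk.support_map]; exact List.mem_map_of_mem hy)
  exact ⟨w.swap, hw, Prod.swap_le_swap.2 hwy⟩

theorem exists_relWalk_forall_exists_le (hJ₁ : PosetConvex J₁) (hconn₁ : ZigzagConnected J₁)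
    (hJ₂ : PosetConvex J₂) (hconn₂ : ZigzagConnected J₂) (hdisj : Disjoint J₁ J₂)
    {a a' b b' : α × β} (ha : a ∈ J₁) (ha' : a' ∈ J₁) (hb : b ∈ J₂) (hb' : b' ∈ J₂)
    (hab : a ≤ b) (ha'b' : a' ≤ b') :
    ∃ Z : RelWalk (SymmGen (· ≤ ·)) J₂ b b', ∀ y ∈ Z.support, ∃ w ∈ J₁, w ≤ y := by
  obtain ⟨W₀⟩ := hconn₁.nonempty_relWalk ha ha'
  obtain ⟨W, -, hW⟩ := W₀.exists_homotopic_le_sup (fun _ _ => Iff.rfl) hJ₁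
  obtain ⟨Z₀⟩ := hconn₂.nonempty_relWalk hb hb'
  obtain ⟨Z, -, hZ⟩ := Z₀.exists_homotopic_inf_le (fun _ _ => Iff.rfl) hJ₂
  exact ⟨Z, exists_le_of_mem_support hJ₁ hJ₂ hdisj ha ha' hab ha'b' W hW Z hZ⟩

end Geometry

theorem exists_mem_le_of_symmGen {P : Type} [Preorder P] {J : Set P} {x y z : P}
    (hx : x ∈ J) (hy : y ∈ J) (hz : z ∈ J)
    (hxy : SymmGen (· ≤ ·) x y) (hyz : SymmGen (· ≤ ·) y z) (hxz : SymmGen (· ≤ ·) x z) :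
    ∃ l ∈ J, l ≤ x ∧ l ≤ y ∧ l ≤ z := by
  rcases hxy with h₁ | h₁ <;> rcases hyz with h₂ | h₂ <;> rcases hxz with h₃ | h₃
  all_goals first
    | exact ⟨x, hx, le_rfl, by solve_by_elim [le_trans], by solve_by_elim [le_trans]⟩
    | exact ⟨y, hy, by solve_by_elim [le_trans], le_rfl, by solve_by_elim [le_trans]⟩
    | exact ⟨z, hz, by solve_by_elim [le_trans], by solve_by_elim [le_trans], le_rfl⟩

namespace PersistenceModule

variable {F : Type} [Field F]

section Preorder

variable {P : Type} [Preorder P]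

theorem map_map_apply (M : PersistenceModule F P) {x y z : P} (h₁ : x ≤ y) (h₂ : y ≤ z)
    (v : M.V x) : M.map h₂ (M.map h₁ v) = M.map (h₁.trans h₂) v :=
  LinearMap.congr_fun (M.map_comp h₁ h₂) v

theorem map_self_apply (M : PersistenceModule F P) {x : P} (h : x ≤ x) (v : M.V x) :
    M.map h v = v := by
  rw [M.map_id]; rfl

def IsIsoOn (M : PersistenceModule F P) (J : Set P) : Prop :=
  ∀ ⦃x y : P⦄, x ∈ J → y ∈ J → ∀ h : x ≤ y, Bijective (M.map h)

variable {M : PersistenceModule F P} {J : Set P}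

open Classical in
noncomputable def compEquiv (hM : M.IsIsoOn J) {x y : P} (hx : x ∈ J) (hy : y ∈ J)
    (h : SymmGen (· ≤ ·) x y) : M.V x ≃ₗ[F] M.V y :=
  if hxy : x ≤ y then .ofBijective (M.map hxy) (hM hx hy hxy)
  else (LinearEquiv.ofBijective (M.map (Or.resolve_left h hxy)) (hM hy hx _)).symm

theorem map_compEquiv (hM : M.IsIsoOn J) {x y u : P} (hx : x ∈ J) (hy : y ∈ J)
    (h : SymmGen (· ≤ ·) x y) (hxu : x ≤ u) (hyu : y ≤ u) (v : M.V x) :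
    M.map hyu (compEquiv hM hx hy h v) = M.map hxu v := by
  unfold compEquiv
  split_ifs with hxy
  · exact M.map_map_apply hxy hyu v
  · set e := LinearEquiv.ofBijective (M.map (Or.resolve_left h hxy)) (hM hy hx _)
    conv_rhs => rw [← e.apply_symm_apply v]
    exact (M.map_map_apply _ hxu _).symm

theorem compEquiv_map (hM : M.IsIsoOn J) {x y l : P} (hx : x ∈ J) (hy : y ∈ J)
    (h : SymmGen (· ≤ ·) x y) (hlx : l ≤ x) (hly : l ≤ y) (v : M.V l) :
    compEquiv hM hx hy h (M.map hlx v) = M.map hly v := by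
  unfold compEquiv
  split_ifs with hxy
  · exact M.map_map_apply hlx hxy v
  · exact (LinearEquiv.symm_apply_eq _).2 (M.map_map_apply hly _ v).symm

theorem compEquiv_apply_of_le (hM : M.IsIsoOn J) {x y : P} (hx : x ∈ J) (hy : y ∈ J)
    (h : SymmGen (· ≤ ·) x y) (hxy : x ≤ y) (v : M.V x) :
    compEquiv hM hx hy h v = M.map hxy v := by
  simpa only [M.map_self_apply] using compEquiv_map hM hx hy h le_rfl hxy v

theorem compEquiv_trans_compEquiv (hM : M.IsIsoOn J) {x y z : P} (hx : x ∈ J) (hy : y ∈ J)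
    (hz : z ∈ J) (hxy : SymmGen (· ≤ ·) x y) (hyz : SymmGen (· ≤ ·) y z)
    (hxz : SymmGen (· ≤ ·) x z) :
    (compEquiv hM hx hy hxy).trans (compEquiv hM hy hz hyz) = compEquiv hM hx hz hxz := by
  obtain ⟨l, hl, hlx, hly, hlz⟩ := exists_mem_le_of_symmGen hx hy hz hxy hyz hxz
  ext v
  obtain ⟨w, rfl⟩ := (hM hl hx hlx).surjective v
  simp only [LinearEquiv.trans_apply, compEquiv_map hM _ _ _ hlx hly,
    compEquiv_map hM _ _ _ hly hlz, compEquiv_map hM _ _ _ hlx hlz]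

noncomputable def transport (hM : M.IsIsoOn J) :
    ∀ {a b : P}, RelWalk (SymmGen (· ≤ ·)) J a b → M.V a ≃ₗ[F] M.V b
  | _, _, .nil _ => LinearEquiv.refl F _
  | _, _, .cons ha h p => (compEquiv hM ha p.start_mem h).trans (transport hM p)

theorem transport_eq_of_homotopic (hM : M.IsIsoOn J) {a b : P}
    {p q : RelWalk (SymmGen (· ≤ ·)) J a b} (hpq : p.Homotopic q) :
    transport hM p = transport hM q := by
  induction hpq with
  | refl => rfl
  | symm _ ih => exact ih.symm
  | trans _ _ ih₁ ih₂ => exact ih₁.trans ih₂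
  | cons ha h _ ih => simp only [transport, ih]
  | contract ha hb hab hbc hac p =>
    simp only [transport, ← compEquiv_trans_compEquiv hM ha hb p.start_mem hab hbc hac]
    rfl

theorem map_transport (hM : M.IsIsoOn J) {a b u : P} (p : RelWalk (SymmGen (· ≤ ·)) J a b)
    (hp : ∀ x ∈ p.support, x ≤ u) (hau : a ≤ u) (hbu : b ≤ u) (v : M.V a) :
    M.map hbu (transport hM p v) = M.map hau v := by
  induction p with
  | nil => rfl
  | @cons a c b ha h p ih =>
    have hcu := hp c (List.mem_cons_of_mem _ p.start_mem_support)
    rw [transport, LinearEquiv.trans_apply,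
      ih (fun x hx => hp x (List.mem_cons_of_mem _ hx)) hcu, map_compEquiv]

theorem transport_cone (hM : M.IsIsoOn J) {L : Type} [AddCommGroup L] [Module F L]
    {σ : ∀ i : ↥J, L →ₗ[F] M.V i}
    (hσ : ∀ (i j : ↥J) (h : i ≤ j), ((M.restrict J).map h).comp (σ i) = σ j) {a b : P}
    (p : RelWalk (SymmGen (· ≤ ·)) J a b) (ha : a ∈ J) (hb : b ∈ J) (v : L) :
    transport hM p (σ ⟨a, ha⟩ v) = σ ⟨b, hb⟩ v := by
  induction p with
  | nil => rfl
  | @cons a c b ha' h p ih =>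
    rw [transport, LinearEquiv.trans_apply, ← ih p.start_mem]
    congr 1
    rcases (id h : a ≤ c ∨ c ≤ a) with hac | hca
    · rw [← M.map_self_apply le_rfl (σ _ v), compEquiv_map hM _ _ _ le_rfl hac]
      exact LinearMap.congr_fun (hσ ⟨a, ha⟩ ⟨c, p.start_mem⟩ hac) v
    · have hσa : σ ⟨a, ha⟩ v = M.map hca (σ ⟨c, p.start_mem⟩ v) :=
        (LinearMap.congr_fun (hσ ⟨c, p.start_mem⟩ ⟨a, ha⟩ hca) v).symm
      rw [hσa]
      exact (compEquiv_map hM _ _ _ hca le_rfl _).trans (M.map_self_apply _ _)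

theorem existsUnique_comp_eq (hM : M.IsIsoOn J) (hconn : ZigzagConnected J)
    (hind : ∀ {x y : P} (p q : RelWalk (SymmGen (· ≤ ·)) J x y),
      transport hM p = transport hM q)
    {L : Type} [AddCommGroup L] [Module F L] {τ : ∀ i : ↥J, L →ₗ[F] M.V i}
    (hτ : IsLimitCone (M.restrict J) L τ) (b : ↥J) {X : Type} [AddCommGroup X] [Module F X]
    (g : X →ₗ[F] M.V b) : ∃! φ : X →ₗ[F] L, (τ b).comp φ = g := by
  -- walks run towards `b`, so that a step `y ≤ y'` is prepended rather than appended
  let path : ∀ y : ↥J, RelWalk (SymmGen (· ≤ ·)) J y b := fun y =>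
    (hconn.nonempty_relWalk y.2 b.2).some
  let ψ : ∀ y : ↥J, X →ₗ[F] M.V y := fun y => (transport hM (path y)).symm.toLinearMap ∘ₗ g
  have hψ : ∀ (y y' : ↥J) (h : y ≤ y'), ((M.restrict J).map h).comp (ψ y) = ψ y' := by
    intro y y' h
    ext v
    show M.map h ((transport hM (path y)).symm (g v)) = (transport hM (path y')).symm (g v)
    rw [hind (path y) (.cons y.2 (.of_le h) (path y')), transport, LinearEquiv.trans_symm,
      LinearEquiv.trans_apply, ← compEquiv_apply_of_le hM y.2 y'.2 (.of_le h) h,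
      LinearEquiv.apply_symm_apply]
  obtain ⟨φ, hφ, huniq⟩ := hτ.2 X ψ hψ
  refine ⟨φ, ?_, fun φ' hφ' => huniq φ' fun y => ?_⟩
  · ext v
    refine (LinearMap.congr_fun (hφ b) v).trans ?_
    show (transport hM (path b)).symm (g v) = g v
    rw [hind (path b) (.nil b.2)]
    rfl
  · ext v
    show τ y (φ' v) = (transport hM (path y)).symm (g v)
    rw [LinearEquiv.eq_symm_apply]
    exact (transport_cone hM hτ.1 (path y) y.2 b.2 (φ' v)).trans (LinearMap.congr_fun hφ' v)

end Preorder

section Product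

variable {α β : Type} [LinearOrder α] [LinearOrder β] {M : PersistenceModule F (α × β)}

theorem transport_eq_transport {J : Set (α × β)} (hJ : PosetConvex J) (hM : M.IsIsoOn J)
    {a b : α × β} (p q : RelWalk (SymmGen (· ≤ ·)) J a b) :
    transport hM p = transport hM q := by
  have loop : ∀ {a : α × β} (p : RelWalk (SymmGen (· ≤ ·)) J a a) (v : M.V a),
      transport hM p v = v := by
    intro a p v
    obtain ⟨q, hpq, hq⟩ := p.exists_homotopic_le_sup (fun _ _ => Iff.rfl) hJ
    rw [transport_eq_of_homotopic hM hpq, ← M.map_self_apply le_rfl (transport hM q v),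
      map_transport hM q (fun x hx => (hq x hx).trans (sup_idem a).le) le_rfl, M.map_self_apply]
  induction q with
  | nil => ext v; exact loop p v
  | @cons a c b ha h q ih =>
    ext v
    have hback := loop (.cons ha h (.cons q.start_mem h.symm (.nil ha))) v
    rw [transport, LinearEquiv.trans_apply, ← ih (.cons q.start_mem h.symm p)]
    exact congrArg (transport hM p) hback.symm

theorem map_comp_cone_eq_of_le {J : Set (α × β)} (hJ : PosetConvex J) (hconn : ZigzagConnected J)
    (hM : M.IsIsoOn J) {L : Type} [AddCommGroup L] [Module F L] {σ : ∀ i : ↥J, L →ₗ[F] M.V i}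
    (hσ : ∀ (i j : ↥J) (h : i ≤ j), ((M.restrict J).map h).comp (σ i) = σ j)
    {a a' c : α × β} (ha : a ∈ J) (ha' : a' ∈ J) (hac : a ≤ c) (ha'c : a' ≤ c) :
    (M.map hac).comp (σ ⟨a, ha⟩) = (M.map ha'c).comp (σ ⟨a', ha'⟩) := by
  obtain ⟨p⟩ := hconn.nonempty_relWalk ha ha'
  obtain ⟨q, -, hq⟩ := p.exists_homotopic_le_sup (fun _ _ => Iff.rfl) hJ
  ext v
  rw [LinearMap.comp_apply, LinearMap.comp_apply, ← transport_cone hM hσ q ha ha' v,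
    map_transport hM q (fun x hx => (hq x hx).trans (sup_le hac ha'c)) hac]

theorem transport_map_cone_eq {J₁ J₂ : Set (α × β)} (hJ₁ : PosetConvex J₁)
    (hconn₁ : ZigzagConnected J₁) (hM₁ : M.IsIsoOn J₁) (hM₂ : M.IsIsoOn J₂)
    {L : Type} [AddCommGroup L] [Module F L] {σ : ∀ i : ↥J₁, L →ₗ[F] M.V i}
    (hσ : ∀ (i j : ↥J₁) (h : i ≤ j), ((M.restrict J₁).map h).comp (σ i) = σ j)
    {b b' : α × β} (Z : RelWalk (SymmGen (· ≤ ·)) J₂ b b')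
    (hZ : ∀ y ∈ Z.support, ∃ w ∈ J₁, w ≤ y) {a a' : α × β} (ha : a ∈ J₁) (ha' : a' ∈ J₁)
    (hab : a ≤ b) (ha'b' : a' ≤ b') (v : L) :
    transport hM₂ Z (M.map hab (σ ⟨a, ha⟩ v)) = M.map ha'b' (σ ⟨a', ha'⟩ v) := by
  induction Z generalizing a with
  | nil => exact LinearMap.congr_fun (map_comp_cone_eq_of_le hJ₁ hconn₁ hM₁ hσ ha ha' hab ha'b') v
  | @cons b c b' hb h Z ih =>
    obtain ⟨w, hw, hwc⟩ := hZ c (List.mem_cons_of_mem _ Z.start_mem_support)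
    obtain ⟨u, hu, hbu, hcu⟩ : ∃ u ∈ J₂, b ≤ u ∧ c ≤ u :=
      (id h : b ≤ c ∨ c ≤ b).elim (fun h => ⟨c, Z.start_mem, h, le_rfl⟩)
        fun h => ⟨b, hb, le_rfl, h⟩
    have hstep : compEquiv hM₂ hb Z.start_mem h (M.map hab (σ ⟨a, ha⟩ v)) =
        M.map hwc (σ ⟨w, hw⟩ v) := by
      apply (hM₂ Z.start_mem hu hcu).injective
      rw [map_compEquiv hM₂ hb Z.start_mem h hbu hcu, M.map_map_apply, M.map_map_apply]
      exact LinearMap.congr_fun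
        (map_comp_cone_eq_of_le hJ₁ hconn₁ hM₁ hσ ha hw (hab.trans hbu) (hwc.trans hcu)) v
    rw [transport, LinearEquiv.trans_apply, hstep]
    exact ih (fun y hy => hZ y (List.mem_cons_of_mem _ hy)) hw hwc ha'b'

end Product

end PersistenceModule

open PersistenceModule in
/-- Let `J₁, J₂` be disjoint connected convex subposets of `(ℝ,≤)²` and
`M` a persistence module whose structure maps inside each `Jₖ` are isomorphisms.
If some `a ∈ J₁`, `b ∈ J₂` satisfy `a ≤ b`, then there is a unique linear map
`φ : lim_{J₁} M → lim_{J₂} M` with `τ_b ∘ φ = M(a ≤ b) ∘ σ_a` for every comparable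
pair `a ∈ J₁`, `b ∈ J₂`; in particular `φ` does not depend on the chosen pair. -/
theorem statement8 (F : Type) [Field F] (M : PersistenceModule F (ℝ × ℝ))
    (J₁ J₂ : Set (ℝ × ℝ)) (hdisj : Disjoint J₁ J₂)
    (hconv₁ : PosetConvex J₁) (hconn₁ : ZigzagConnected J₁)
    (hconv₂ : PosetConvex J₂) (hconn₂ : ZigzagConnected J₂)
    (hiso₁ : ∀ (i j : ↥J₁) (h : i ≤ j), Function.Bijective ((M.restrict J₁).map h))
    (hiso₂ : ∀ (i j : ↥J₂) (h : i ≤ j), Function.Bijective ((M.restrict J₂).map h))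
    (hex : ∃ (a : ↥J₁) (b : ↥J₂), (a : ℝ × ℝ) ≤ (b : ℝ × ℝ))
    (L₁ : Type) [AddCommGroup L₁] [Module F L₁] (σ : ∀ i : ↥J₁, L₁ →ₗ[F] M.V ↑i)
    (hσ : IsLimitCone (M.restrict J₁) L₁ σ)
    (L₂ : Type) [AddCommGroup L₂] [Module F L₂] (τ : ∀ i : ↥J₂, L₂ →ₗ[F] M.V ↑i)
    (hτ : IsLimitCone (M.restrict J₂) L₂ τ) :
    ∃! φ : L₁ →ₗ[F] L₂, ∀ (a : ↥J₁) (b : ↥J₂) (hab : (a : ℝ × ℝ) ≤ (b : ℝ × ℝ)),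
      (τ b).comp φ = (M.map hab).comp (σ a) := by
  have hM₁ : M.IsIsoOn J₁ := fun x y hx hy h => hiso₁ ⟨x, hx⟩ ⟨y, hy⟩ h
  have hM₂ : M.IsIsoOn J₂ := fun x y hx hy h => hiso₂ ⟨x, hx⟩ ⟨y, hy⟩ h
  obtain ⟨a₀, b₀, hab₀⟩ := hex
  obtain ⟨φ, hφ, huniq⟩ := existsUnique_comp_eq hM₂ hconn₂ (transport_eq_transport hconv₂ hM₂)
    hτ b₀ ((M.map hab₀).comp (σ a₀))
  refine ⟨φ, fun a b hab => ?_, fun φ' hφ' => huniq φ' (hφ' a₀ b₀ hab₀)⟩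
  obtain ⟨Z, hZ⟩ := exists_relWalk_forall_exists_le hconv₁ hconn₁ hconv₂ hconn₂ hdisj
    a₀.2 a.2 b₀.2 b.2 hab₀ hab
  ext v
  rw [LinearMap.comp_apply, ← transport_cone hM₂ hτ.1 Z b₀.2 b.2 (φ v)]
  exact (congrArg (transport hM₂ Z) (LinearMap.congr_fun hφ v)).trans
    (transport_map_cone_eq hconv₁ hconn₁ hM₁ hM₂ hσ.1 Z hZ a₀.2 a.2 hab₀ hab v)
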